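/- The map Θ : B(0,√2) ⊂ ℝ² → open unit disk, given in polar coordinates by (r, φ) ↦ (r√(1 − r²/4), φ), i.e. Θ(x) = √(1 − |x|²/4)·x, pushes forward the Lebesgue measure on B(0,√2) to the measure with density 1/√(1 − |y|²) on the unit disk (the Riemannian area measure of S² in projection coordinates). -/

import Mathlib

/-!
Writing `Θ x = g x • x` with `g x = √(1 - ‖x‖²/4)`, one has `1 - ‖Θ x‖² = (1 - ‖x‖²/2)²`, so
`Θ` maps the ball of radius `√2` bijectively onto the unit ball. Its derivative
`g x • id + Dg(x) ⊗ x` is a rank-one perturbation of a multiple of the identity, so in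
dimension 2 its Jacobian is `g² + g Dg(x) = g² - ‖x‖²/4 = 1 - ‖x‖²/2 = √(1 - ‖Θ x‖²)`, and the
change of variables formula turns this into the density `1/√(1 - ‖y‖²)` of the pushforward.
-/

open Real Set MeasureTheory Metric ENNReal

theorem LinearMap.det_one_add_smulRight {R M : Type*} [CommRing R] [AddCommGroup M] [Module R M]
    [Module.Free R M] [Module.Finite R M] (f : M →ₗ[R] R) (v : M) :
    (1 + f.smulRight v).det = 1 + f v := by
  classical
  let b := Module.Free.chooseBasis R M
  have hmat : LinearMap.toMatrix b b (f.smulRight v)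
      = Matrix.replicateCol Unit (b.repr v) * Matrix.replicateRow Unit (fun j => f (b j)) := by
    ext i j
    simp [LinearMap.toMatrix_apply, Matrix.mul_apply, mul_comm]
  rw [← LinearMap.det_toMatrix b, map_add, LinearMap.toMatrix_one, hmat,
    Matrix.det_one_add_replicateCol_mul_replicateRow]
  congr 1
  conv_rhs => rw [← b.sum_repr v]
  simp only [dotProduct, map_sum, map_smul, smul_eq_mul, mul_comm]

theorem LinearMap.det_smul_one_add_smulRight {K M : Type*} [Field K] [AddCommGroup M] [Module K M]
    [FiniteDimensional K M] {a : K} (ha : a ≠ 0) (f : M →ₗ[K] K) (v : M) :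
    (a • 1 + f.smulRight v).det = a ^ Module.finrank K M * (1 + a⁻¹ * f v) := by
  have : a • 1 + f.smulRight v = a • (1 + (a⁻¹ • f).smulRight v) := by
    ext w; simp [smul_smul, ha]
  rw [this, LinearMap.det_smul, LinearMap.det_one_add_smulRight]
  rfl

theorem map_restrict_eq_withDensity_of_abs_det_fderiv_mul_eq_one
    {E : Type*} [NormedAddCommGroup E] [NormedSpace ℝ E] [FiniteDimensional ℝ E]
    [MeasurableSpace E] [BorelSpace E] (μ : Measure E) [μ.IsAddHaarMeasure]
    {s : Set E} {f : E → E} {f' : E → E →L[ℝ] E} {ρ : E → ℝ≥0∞}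
    (hs : MeasurableSet s) (hf' : ∀ x ∈ s, HasFDerivWithinAt f (f' x) s x) (hf : InjOn f s)
    (hρ : ∀ x ∈ s, ENNReal.ofReal |(f' x).det| * ρ (f x) = 1) :
    Measure.map f (μ.restrict s) = (μ.restrict (f '' s)).withDensity ρ := by
  have hfm : AEMeasurable f (μ.restrict s) :=
    ContinuousOn.aemeasurable (fun x hx => (hf' x hx).continuousWithinAt) hs
  ext A hA
  have hpt : ∀ x ∈ s,
      ENNReal.ofReal |(f' x).det| * A.indicator ρ (f x) = (f ⁻¹' A).indicator 1 x := by
    intro x hx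
    by_cases hxA : f x ∈ A
    · simp [hxA, hρ x hx]
    · simp [hxA]
  rw [Measure.map_apply_of_aemeasurable hfm hA, withDensity_apply _ hA, ← lintegral_indicator hA,
    lintegral_image_eq_lintegral_abs_det_fderiv_mul μ hs hf' hf, setLIntegral_congr_fun hs hpt,
    lintegral_indicator_one₀ (hfm.nullMeasurableSet_preimage hA)]

theorem mem_ball_zero_sqrt_iff {E : Type*} [SeminormedAddCommGroup E] {x : E} {r : ℝ} :
    x ∈ ball (0 : E) √r ↔ ‖x‖ ^ 2 < r := by
  rw [mem_ball_zero_iff, lt_sqrt (norm_nonneg _)]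

section
variable {E : Type*} [NormedAddCommGroup E] [NormedSpace ℝ E]

noncomputable def metricalDistortion (x : E) : E := √(1 - ‖x‖ ^ 2 / 4) • x

theorem one_sub_norm_sq_metricalDistortion {x : E} (hx : ‖x‖ ^ 2 ≤ 4) :
    1 - ‖metricalDistortion x‖ ^ 2 = (1 - ‖x‖ ^ 2 / 2) ^ 2 := by
  rw [metricalDistortion, norm_smul, norm_of_nonneg (sqrt_nonneg _), mul_pow,
    sq_sqrt (by linarith)]
  ring

theorem sqrt_one_sub_norm_sq_metricalDistortion {x : E} (hx : ‖x‖ ^ 2 ≤ 2) :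
    √(1 - ‖metricalDistortion x‖ ^ 2) = 1 - ‖x‖ ^ 2 / 2 := by
  rw [one_sub_norm_sq_metricalDistortion (by linarith), sqrt_sq (by linarith)]

theorem injOn_metricalDistortion : InjOn (metricalDistortion (E := E)) (ball 0 √2) := by
  intro x hx y hy hxy
  rw [mem_ball_zero_sqrt_iff] at hx hy
  have hnorm : ‖x‖ ^ 2 = ‖y‖ ^ 2 := by
    have := congrArg (fun z : E => √(1 - ‖z‖ ^ 2)) hxy
    simp only [sqrt_one_sub_norm_sq_metricalDistortion hx.le,
      sqrt_one_sub_norm_sq_metricalDistortion hy.le] at this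
    linarith
  have hpos : 0 < √(1 - ‖x‖ ^ 2 / 4) := sqrt_pos.2 (by linarith)
  rw [metricalDistortion, metricalDistortion, ← hnorm] at hxy
  exact smul_right_injective E hpos.ne' hxy

/-- Obtained by solving `1 - ‖Θ x‖² = (1 - ‖x‖² / 2)²` for `‖x‖²`. -/
noncomputable def metricalDistortionInv (y : E) : E :=
  √(2 / (1 + √(1 - ‖y‖ ^ 2))) • y

theorem norm_sq_metricalDistortionInv {y : E} (hy : ‖y‖ ≤ 1) :
    ‖metricalDistortionInv y‖ ^ 2 = 2 * (1 - √(1 - ‖y‖ ^ 2)) := by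
  have hs0 : 0 ≤ √(1 - ‖y‖ ^ 2) := sqrt_nonneg _
  have hs2 : √(1 - ‖y‖ ^ 2) ^ 2 = 1 - ‖y‖ ^ 2 := sq_sqrt (by nlinarith [norm_nonneg y])
  rw [metricalDistortionInv, norm_smul, norm_of_nonneg (sqrt_nonneg _), mul_pow,
    sq_sqrt (by positivity)]
  field_simp
  nlinarith

theorem metricalDistortion_metricalDistortionInv {y : E} (hy : ‖y‖ ≤ 1) :
    metricalDistortion (metricalDistortionInv y) = y := by
  have hs0 : 0 ≤ √(1 - ‖y‖ ^ 2) := sqrt_nonneg _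
  rw [metricalDistortion, norm_sq_metricalDistortionInv hy, metricalDistortionInv, smul_smul,
    ← sqrt_mul (by nlinarith), sqrt_eq_one.2, one_smul]
  field_simp
  ring

theorem image_metricalDistortion_ball : metricalDistortion '' ball (0 : E) √2 = ball 0 1 := by
  refine Subset.antisymm ?_ fun y hy => ⟨metricalDistortionInv y, ?_, ?_⟩
  · rintro _ ⟨x, hx, rfl⟩
    rw [mem_ball_zero_sqrt_iff] at hx
    have := one_sub_norm_sq_metricalDistortion (E := E) (x := x) (by linarith)
    rw [mem_ball_zero_iff, ← sq_lt_one_iff₀ (norm_nonneg _)]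
    nlinarith
  · rw [mem_ball_zero_iff] at hy
    rw [mem_ball_zero_sqrt_iff, norm_sq_metricalDistortionInv hy.le]
    have : 0 < √(1 - ‖y‖ ^ 2) := sqrt_pos.2 (by nlinarith [norm_nonneg y])
    linarith
  · exact metricalDistortion_metricalDistortionInv (mem_ball_zero_iff.1 hy).le

end

section
variable {E : Type*} [NormedAddCommGroup E] [InnerProductSpace ℝ E]

theorem hasFDerivAt_sqrt_one_sub_norm_sq_div_four {x : E} (hx : ‖x‖ ^ 2 < 4) :
    HasFDerivAt (fun y : E => √(1 - ‖y‖ ^ 2 / 4))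
      (-(4 * √(1 - ‖x‖ ^ 2 / 4))⁻¹ • innerSL ℝ x) x := by
  have hq := ((hasStrictFDerivAt_norm_sq x).hasFDerivAt.const_mul (1 / 4 : ℝ)).const_sub 1
  convert hq.sqrt (by linarith) using 1
  · funext y; ring_nf
  · ext y
    simp only [mul_inv_rev, neg_smul, neg_apply, smul_apply, coe_innerSL_apply, smul_eq_mul,
      one_div, smul_neg, nsmul_eq_mul, Nat.cast_ofNat, neg_inj]
    ring_nf

theorem hasFDerivAt_metricalDistortion {x : E} (hx : ‖x‖ ^ 2 < 4) :
    HasFDerivAt metricalDistortion (√(1 - ‖x‖ ^ 2 / 4) • ContinuousLinearMap.id ℝ E +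
      (-(4 * √(1 - ‖x‖ ^ 2 / 4))⁻¹ • innerSL ℝ x).smulRight x) x :=
  (hasFDerivAt_sqrt_one_sub_norm_sq_div_four hx).smul (hasFDerivAt_id x)

theorem det_fderiv_metricalDistortion (hE : Module.finrank ℝ E = 2) {x : E} (hx : ‖x‖ ^ 2 < 4) :
    (fderiv ℝ metricalDistortion x).det = 1 - ‖x‖ ^ 2 / 2 := by
  have hg : 0 < √(1 - ‖x‖ ^ 2 / 4) := sqrt_pos.2 (by linarith)
  have : FiniteDimensional ℝ E := Module.finite_of_finrank_eq_succ hE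
  set g := √(1 - ‖x‖ ^ 2 / 4)
  have hlin : ((g • ContinuousLinearMap.id ℝ E + (-(4 * g)⁻¹ • innerSL ℝ x).smulRight x :
      E →L[ℝ] E) : E →ₗ[ℝ] E) =
      g • 1 + ((-(4 * g)⁻¹ • innerSL ℝ x : E →L[ℝ] ℝ) : E →ₗ[ℝ] ℝ).smulRight x :=
    rfl
  have hg2 : g ^ 2 = 1 - ‖x‖ ^ 2 / 4 := sq_sqrt (by linarith)
  rw [(hasFDerivAt_metricalDistortion hx).fderiv, ContinuousLinearMap.det, hlin,
    LinearMap.det_smul_one_add_smulRight hg.ne', hE]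
  simp only [ContinuousLinearMap.coe_coe, smul_apply, innerSL_apply_apply,
    real_inner_self_eq_norm_sq, smul_eq_mul]
  field_simp
  linear_combination 8 * hg2
end

/-- The metrical distortion of the 2-sphere in projection
coordinates, `Θ(x) = √(1 - ‖x‖²/4) • x` on `B(0,√2)`, pushes the Lebesgue
measure forward to the Riemannian area measure of `S²` in projection
coordinates, i.e. the measure with density `1/√(1-‖y‖²)` on the unit disk. -/
theorem metrical_distortion_pushforward
    (Θ : EuclideanSpace ℝ (Fin 2) → EuclideanSpace ℝ (Fin 2))
    (hΘ : ∀ x, Θ x = Real.sqrt (1 - ‖x‖^2/4) • x) :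
    Measure.map Θ (volume.restrict (Metric.ball (0 : EuclideanSpace ℝ (Fin 2)) (Real.sqrt 2)))
      = (volume.restrict (Metric.ball (0 : EuclideanSpace ℝ (Fin 2)) 1)).withDensity
          (fun y => ENNReal.ofReal (1 / Real.sqrt (1 - ‖y‖^2))) := by
  obtain rfl : Θ = metricalDistortion := funext hΘ
  rw [← image_metricalDistortion_ball]
  refine map_restrict_eq_withDensity_of_abs_det_fderiv_mul_eq_one volume measurableSet_ball
    (f' := fderiv ℝ metricalDistortion) (fun x hx => ?_) injOn_metricalDistortion fun x hx => ?_
  all_goals rw [mem_ball_zero_sqrt_iff] at hx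
  · exact (hasFDerivAt_metricalDistortion (by linarith)).differentiableAt
      |>.hasFDerivAt.hasFDerivWithinAt
  · have hJ : 0 < 1 - ‖x‖ ^ 2 / 2 := by linarith
    rw [det_fderiv_metricalDistortion finrank_euclideanSpace_fin (by linarith),
      sqrt_one_sub_norm_sq_metricalDistortion hx.le, abs_of_pos hJ, ← ENNReal.ofReal_mul hJ.le,
      mul_one_div_cancel hJ.ne', ENNReal.ofReal_one]
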